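/- arXiv:1604.02348 — 4 statements merged into one kernel-verified Lean document; each statement's English description precedes it below -/
import Mathlib

section
/- Let q₀,...,qₙ be positive integers, δ = lcm(q₀,...,qₙ), and for i = 1,...,n let wᵢ ∈ ℝ^{n+1} be the vector with coordinate −δ/q₀ in position 0, coordinate δ/qᵢ in position i, and 0 elsewhere. Then the generalized cross product w₁ × ⋯ × wₙ equals the vector whose i-th coordinate is δⁿ/(q₀⋯qₙ/qᵢ) = δⁿ·qᵢ/(q₀q₁⋯qₙ) ... i.e. the vector (δⁿ/(q₁⋯qₙ), δⁿ/(q₀q₂⋯qₙ), ..., δⁿ/(q₀⋯q_{n−1})). In particular its Euclidean norm is (δⁿ/(q₀⋯qₙ))·√(q₀² + ⋯ + qₙ²). -/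
/-- Generalized cross product of `n` vectors in `ℝ^{n+1}`: the `k`-th coordinate is
`(-1)^k` times the `n × n` minor obtained by deleting column `k` from the matrix whose
rows are the given vectors. -/
def crossProd {n : ℕ} (v : Fin n → Fin (n + 1) → ℝ) : Fin (n + 1) → ℝ :=
  fun k => (-1) ^ (k : ℕ) * Matrix.det (Matrix.of fun i j : Fin n => v i (Fin.succAbove k j))

/-- The vectors `wᵢ = -(δ/q₀)ê₀ + (δ/qᵢ)êᵢ`, `i = 1,...,n`. -/
noncomputable def wvec {n : ℕ} (q : Fin (n + 1) → ℕ) (δ : ℕ) : Fin n → Fin (n + 1) → ℝ :=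
  fun i j => if (j : ℕ) = 0 then -((δ : ℝ) / (q 0 : ℝ))
    else if (j : ℕ) = (i : ℕ) + 1 then (δ : ℝ) / (q j : ℝ) else 0

/- The first coordinate of the cross product is a diagonal minor, `∏ δ/qᵢ`. The others follow
from orthogonality to each `wᵢ`, which forces `q₀ cᵢ = qᵢ c₀`: `u ⬝ᵥ crossProd v` is the
Laplace expansion of the determinant with rows `u, v₁, …, vₙ`, which vanishes for `u = vᵢ`. -/

theorem dotProduct_crossProd {n : ℕ} (u : Fin (n + 1) → ℝ) (v : Fin n → Fin (n + 1) → ℝ) :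
    u ⬝ᵥ crossProd v = (Matrix.of (Fin.cons u v : Fin (n + 1) → Fin (n + 1) → ℝ)).det := by
  rw [Matrix.det_succ_row_zero]
  refine Finset.sum_congr rfl fun j _ => ?_
  rw [crossProd, Matrix.of_apply, Fin.cons_zero, mul_left_comm, mul_assoc]
  congr 3

theorem dotProduct_crossProd_self {n : ℕ} (v : Fin n → Fin (n + 1) → ℝ) (i : Fin n) :
    v i ⬝ᵥ crossProd v = 0 := by
  rw [dotProduct_crossProd]
  exact Matrix.det_zero_of_row_eq (Fin.succ_ne_zero i).symm rfl

theorem wvec_eq {n : ℕ} (q : Fin (n + 1) → ℕ) (δ : ℕ) (i : Fin n) :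
    wvec q δ i = Pi.single 0 (-((δ : ℝ) / q 0)) + Pi.single i.succ ((δ : ℝ) / q i.succ) := by
  ext j
  induction j using Fin.cases with
  | zero => simp [wvec]
  | succ j =>
    by_cases hij : i = j
    · subst hij
      simp [wvec]
    · simp [wvec, Fin.val_ne_of_ne (Ne.symm hij), Ne.symm hij]

theorem crossProd_wvec_zero {n : ℕ} (q : Fin (n + 1) → ℕ) (δ : ℕ) :
    crossProd (wvec q δ) 0 = ∏ i : Fin n, (δ : ℝ) / q i.succ := by
  rw [crossProd, Fin.val_zero, pow_zero, one_mul, ← Matrix.det_diagonal]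
  congr 1
  ext i j
  simp [wvec_eq, Pi.single_apply, Matrix.diagonal_apply, eq_comm]

theorem crossProd_wvec_succ {n : ℕ} (q : Fin (n + 1) → ℕ) {δ : ℕ} (hq : ∀ i, q i ≠ 0)
    (hδ : δ ≠ 0) (i : Fin n) :
    (q 0 : ℝ) * crossProd (wvec q δ) i.succ = q i.succ * crossProd (wvec q δ) 0 := by
  have h := dotProduct_crossProd_self (wvec q δ) i
  rw [wvec_eq, add_dotProduct, single_dotProduct, single_dotProduct] at h
  have hq₀ : (q 0 : ℝ) ≠ 0 := Nat.cast_ne_zero.mpr (hq 0)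
  have hqᵢ : (q i.succ : ℝ) ≠ 0 := Nat.cast_ne_zero.mpr (hq i.succ)
  have h' : (δ : ℝ) * (q 0 * crossProd (wvec q δ) i.succ - q i.succ * crossProd (wvec q δ) 0)
      = 0 := by
    rw [← mul_zero ((q 0 : ℝ) * q i.succ), ← h]
    field_simp
    ring
  exact sub_eq_zero.mp ((mul_eq_zero.mp h').resolve_left (Nat.cast_ne_zero.mpr hδ))

theorem crossProd_wvec_eq {n : ℕ} (q : Fin (n + 1) → ℕ) {δ : ℕ} (hq : ∀ i, q i ≠ 0)
    (hδ : δ ≠ 0) : crossProd (wvec q δ) = fun i => (δ : ℝ) ^ n * q i / ∏ j, (q j : ℝ) := by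
  have hq' : ∀ i, (q i : ℝ) ≠ 0 := fun i => Nat.cast_ne_zero.mpr (hq i)
  have hc₀ : crossProd (wvec q δ) 0 = (δ : ℝ) ^ n * q 0 / ∏ j, (q j : ℝ) := by
    rw [crossProd_wvec_zero, Fin.prod_univ_succ, Finset.prod_div_distrib, Finset.prod_const,
      Finset.card_univ, Fintype.card_fin, mul_comm _ (q 0 : ℝ), mul_div_mul_left _ _ (hq' 0)]
  funext k
  induction k using Fin.cases with
  | zero => exact hc₀
  | succ i =>
    apply mul_left_cancel₀ (hq' 0)
    rw [crossProd_wvec_succ q hq hδ, hc₀]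
    ring

theorem sqrt_sum_sq_mul {ι : Type*} [Fintype ι] {c : ℝ} (hc : 0 ≤ c) (x : ι → ℝ) :
    √(∑ i, (c * x i) ^ 2) = c * √(∑ i, x i ^ 2) := by
  simp_rw [mul_pow, ← Finset.mul_sum, Real.sqrt_mul (sq_nonneg c), Real.sqrt_sq hc]

/-- The cross product of the `wᵢ` is the vector with `i`-th coordinate
`δⁿ·qᵢ/(q₀⋯qₙ)`, and its Euclidean norm is `(δⁿ/(q₀⋯qₙ))·√(q₀²+⋯+qₙ²)`. -/
theorem crossProd_wvec {n : ℕ} (q : Fin (n + 1) → ℕ) (hq : ∀ i, 0 < q i) :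
    crossProd (wvec q (Finset.univ.lcm q)) =
      (fun i => ((Finset.univ.lcm q : ℕ) : ℝ) ^ n * (q i : ℝ) / ∏ j, (q j : ℝ)) ∧
    Real.sqrt (∑ i, (crossProd (wvec q (Finset.univ.lcm q)) i) ^ 2) =
      ((Finset.univ.lcm q : ℕ) : ℝ) ^ n / (∏ j, (q j : ℝ)) *
        Real.sqrt (∑ i, (q i : ℝ) ^ 2) := by
  have hq₀ : ∀ i, q i ≠ 0 := fun i => (hq i).ne'
  have hδ : Finset.univ.lcm q ≠ 0 := by
    simpa [Finset.lcm_eq_zero_iff] using hq₀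
  have hcross := crossProd_wvec_eq q hq₀ hδ
  refine ⟨hcross, ?_⟩
  simp_rw [hcross, mul_div_right_comm _ (q _ : ℝ)]
  exact sqrt_sum_sq_mul (by positivity) _
end

section
/- Let q₀,...,qₙ be positive integers with gcd(q₀,...,qₙ) = 1, δ = lcm(q₀,...,qₙ). Suppose A is the n×(n+1) real matrix whose first row is (−q₁/g₀₁, q₀/g₀₁, 0, ..., 0) with g₀₁ = gcd(q₀,q₁), and whose s-th row (2 ≤ s ≤ n) is (x_{s0} − δ/q₀, x_{s1}, ..., x_{s(s−1)}, g_{s−1}/g_s, 0, ..., 0), where gₛ = gcd(q₀,...,qₛ) and x_{s0}q₀ + ⋯ + x_{s(s−1)}q_{s−1} + (g_{s−1}/g_s)qₛ = δ with all x_{sj} integers. Then the generalized cross product of the rows of A equals (q₀, q₁, ..., qₙ), and in particular the n-dimensional volume of the parallelotope spanned by the rows is √(q₀² + ⋯ + qₙ²). -/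
/-- `gcd(q₀,...,qₜ)`. -/
def partialGcd {n : ℕ} (q : Fin (n + 1) → ℕ) (t : ℕ) : ℕ :=
  (Finset.univ.filter fun i : Fin (n + 1) => (i : ℕ) ≤ t).gcd q

/-!
Both the cross product and `q` are orthogonal to every row: the former because a determinant
with a repeated row vanishes, the latter by the defining relation of the `x_{sj}`. Row `s`
vanishes beyond column `s + 1` and has the nonzero pivot `g_s / g_{s+1}` there, so a vector
orthogonal to all rows is determined by its `0`-th coordinate. For the cross product that
coordinate is the determinant of a lower triangular matrix, the telescoping product
`∏ g_s / g_{s+1} = g_0 / g_n = q₀`.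
-/

open Finset

section partialGcd

variable {n : ℕ} (q : Fin (n + 1) → ℕ)

lemma partialGcd_succ_dvd (t : ℕ) : partialGcd q (t + 1) ∣ partialGcd q t :=
  Finset.dvd_gcd fun i hi => Finset.gcd_dvd <| by
    simp only [mem_filter, mem_univ, true_and] at hi ⊢
    omega

lemma partialGcd_zero : partialGcd q 0 = q 0 := by
  have : (univ.filter fun i : Fin (n + 1) => (i : ℕ) ≤ 0) = {0} := by
    ext i
    simp only [mem_filter, mem_univ, true_and, mem_singleton, Nat.le_zero, Fin.val_eq_zero_iff]
  rw [partialGcd, this, gcd_singleton, normalize_eq]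

lemma partialGcd_last : partialGcd q n = univ.gcd q := by
  rw [partialGcd, filter_true_of_mem fun i _ => Nat.lt_succ_iff.mp i.isLt]

def partialGcdRatio (t : ℕ) : ℕ := partialGcd q t / partialGcd q (t + 1)

lemma prod_range_partialGcdRatio_mul (m : ℕ) :
    (∏ t ∈ range m, partialGcdRatio q t) * partialGcd q m = partialGcd q 0 := by
  induction m with
  | zero => simp
  | succ m ih =>
    rw [prod_range_succ, mul_assoc, partialGcdRatio,
      Nat.div_mul_cancel (partialGcd_succ_dvd q m), ih]

lemma prod_partialGcdRatio (hgcd : univ.gcd q = 1) :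
    ∏ s : Fin n, partialGcdRatio q s = q 0 := by
  have := prod_range_partialGcdRatio_mul q n
  rwa [partialGcd_last, hgcd, mul_one, partialGcd_zero, ← Fin.prod_univ_eq_prod_range] at this

end partialGcd

section crossProd

variable {n : ℕ} (A : Fin n → Fin (n + 1) → ℝ)

lemma sum_mul_crossProd (w : Fin (n + 1) → ℝ) :
    ∑ j, w j * crossProd A j = (Matrix.of (Fin.cons w A)).det := by
  rw [Matrix.det_succ_row_zero]
  refine sum_congr rfl fun j _ => ?_
  simp only [crossProd, Matrix.of_apply, Fin.cons_zero]
  rw [show (Matrix.of (Fin.cons w A)).submatrix Fin.succ j.succAbove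
      = Matrix.of fun i k => A i (j.succAbove k) from rfl]
  ring

lemma sum_mul_crossProd_eq_zero (s : Fin n) : ∑ j, A s j * crossProd A j = 0 := by
  rw [sum_mul_crossProd]
  exact Matrix.det_zero_of_row_eq (Fin.succ_ne_zero s).symm rfl

variable {A} (hA : ∀ s j, s.succ < j → A s j = 0)
include hA

lemma crossProd_zero_of_staircase : crossProd A 0 = ∏ s, A s s.succ := by
  rw [crossProd, Fin.val_zero, pow_zero, one_mul, Matrix.det_of_isLowerTriangular]
  · simp
  · intro i j hij
    exact hA i _ (Fin.succ_lt_succ_iff.mpr hij)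

lemma eq_zero_of_staircase (hpivot : ∀ s, A s s.succ ≠ 0) {d : Fin (n + 1) → ℝ}
    (hd0 : d 0 = 0) (hd : ∀ s, ∑ j, A s j * d j = 0) : d = 0 := by
  suffices ∀ k, d k = 0 from funext this
  intro k
  induction k using Fin.strong_induction_on with
  | h k ih =>
    cases k using Fin.cases with
    | zero => exact hd0
    | succ s =>
      have hs : ∑ j, A s j * d j = A s s.succ * d s.succ := by
        refine sum_eq_single _ (fun j _ hj => ?_) (by simp)
        rcases lt_or_gt_of_ne hj with hlt | hgt
        · rw [ih j hlt, mul_zero]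
        · rw [hA s j hgt, zero_mul]
      simpa [hpivot s] using hs.symm.trans (hd s)

end crossProd

section gcdBasis

variable {n : ℕ} (q : Fin (n + 1) → ℕ) (x : Fin n → Fin (n + 1) → ℤ)

/-- Row `s` is the paper's row `s + 1`: its pivot `g_s / g_{s+1}` sits in column `s + 1`. -/
def gcdBasis (s : Fin n) (j : Fin (n + 1)) : ℝ :=
  if (j : ℕ) ≤ (s : ℕ) then
    (x s j : ℝ) - (if (j : ℕ) = 0 then ((univ.lcm q / q 0 : ℕ) : ℝ) else 0)
  else if (j : ℕ) = (s : ℕ) + 1 then (partialGcdRatio q s : ℝ)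
  else 0

lemma gcdBasis_of_succ_lt {s : Fin n} {j : Fin (n + 1)} (h : s.succ < j) :
    gcdBasis q x s j = 0 := by
  rw [Fin.lt_def, Fin.val_succ] at h
  rw [gcdBasis, if_neg (show ¬(j : ℕ) ≤ s by omega),
    if_neg (show (j : ℕ) ≠ s + 1 by omega)]

lemma gcdBasis_succ (s : Fin n) : gcdBasis q x s s.succ = partialGcdRatio q s := by
  simp [gcdBasis]

lemma sum_gcdBasis_mul_eq_zero (s : Fin n)
    (hs : (∑ j : Fin (n + 1), if (j : ℕ) ≤ (s : ℕ) then x s j * (q j : ℤ) else 0) +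
      (partialGcdRatio q s : ℤ) * (q s.succ : ℤ) = (univ.lcm q : ℕ)) :
    ∑ j, gcdBasis q x s j * q j = 0 := by
  have hsplit : ∀ j, gcdBasis q x s j * q j =
      ((if (j : ℕ) ≤ (s : ℕ) then (x s j : ℝ) * q j else 0) +
        if j = s.succ then (partialGcdRatio q s : ℝ) * q j else 0) -
      if j = 0 then ((univ.lcm q / q 0 : ℕ) : ℝ) * q j else 0 := by
    intro j
    simp only [gcdBasis, Fin.ext_iff, Fin.val_succ, Fin.val_zero]
    split_ifs <;> first | ring1 | omega
  have hlcm : ((univ.lcm q / q 0 : ℕ) : ℝ) * q 0 = (univ.lcm q : ℕ) := by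
    rw [← Nat.cast_mul, Nat.div_mul_cancel (dvd_lcm (mem_univ 0))]
  have hs' := congrArg (Int.cast : ℤ → ℝ) hs
  push_cast [apply_ite (Int.cast : ℤ → ℝ)] at hs'
  simp only [hsplit, sum_sub_distrib, sum_add_distrib, sum_ite_eq', mem_univ, if_true, hlcm, hs',
    sub_self]

end gcdBasis

/-- The cross product of the rows `e₁,...,eₙ` of the matrix `A` constructed in the paper
equals `(q₀,...,qₙ)`; in particular the volume of the parallelotope spanned by the rows
is `√(q₀²+⋯+qₙ²)`. -/
theorem crossProd_basis_eq {n : ℕ} (q : Fin (n + 1) → ℕ) (hq : ∀ i, 0 < q i)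
    (hgcd : Finset.univ.gcd q = 1)
    (A : Fin n → Fin (n + 1) → ℝ) (x : Fin n → Fin (n + 1) → ℤ)
    (hsum : ∀ s : Fin n,
      (∑ j : Fin (n + 1), if (j : ℕ) ≤ (s : ℕ) then x s j * (q j : ℤ) else 0) +
        ((partialGcd q (s : ℕ) / partialGcd q ((s : ℕ) + 1) : ℕ) : ℤ) * (q s.succ : ℤ) =
        ((Finset.univ.lcm q : ℕ) : ℤ))
    (hA : ∀ (s : Fin n) (j : Fin (n + 1)), A s j =
      if (j : ℕ) ≤ (s : ℕ) then
        (x s j : ℝ) - (if (j : ℕ) = 0 then ((Finset.univ.lcm q / q 0 : ℕ) : ℝ) else 0)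
      else if (j : ℕ) = (s : ℕ) + 1 then
        ((partialGcd q (s : ℕ) / partialGcd q ((s : ℕ) + 1) : ℕ) : ℝ)
      else 0) :
    crossProd A = (fun k => (q k : ℝ)) ∧
    Real.sqrt (∑ k, (crossProd A k) ^ 2) = Real.sqrt (∑ k, (q k : ℝ) ^ 2) := by
  obtain rfl : A = gcdBasis q x := funext₂ hA
  have hstair : ∀ s j, s.succ < j → gcdBasis q x s j = 0 := fun _ _ => gcdBasis_of_succ_lt q x
  have hprod : ∏ s, gcdBasis q x s s.succ = q 0 := by
    simp only [gcdBasis_succ]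
    exact_mod_cast prod_partialGcdRatio q hgcd
  have hpivot : ∀ s, gcdBasis q x s s.succ ≠ 0 := fun s =>
    prod_ne_zero_iff.mp (hprod ▸ Nat.cast_ne_zero.mpr (hq 0).ne') s (mem_univ s)
  have hcross : crossProd (gcdBasis q x) = fun k => (q k : ℝ) := by
    rw [← sub_eq_zero]
    refine eq_zero_of_staircase hstair hpivot ?_ fun s => ?_
    · simp only [Pi.sub_apply, crossProd_zero_of_staircase hstair, hprod, sub_self]
    · simp only [Pi.sub_apply, mul_sub, sum_sub_distrib, sum_mul_crossProd_eq_zero,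
        sum_gcdBasis_mul_eq_zero q x s (hsum s), sub_self]
  exact ⟨hcross, by rw [hcross]⟩
end

section
/- Let q₀,...,qₙ be positive integers with gcd 1, δ = lcm(q₀,...,qₙ), M = { m ∈ ℤ^{n+1} : Σ mᵢqᵢ = 0 } (a rank-n lattice), and H = { x ∈ ℝ^{n+1} : Σ xᵢqᵢ = δ }. Define e₁ = (−q₁/gcd(q₀,q₁), q₀/gcd(q₀,q₁), 0,...,0), and for 2 ≤ s ≤ n define eₛ = pₛ − v₀ where v₀ = (δ/q₀, 0,...,0) and pₛ is any integer point of H of the form (x_{s0}, ..., x_{s(s−1)}, gcd(q₀,...,q_{s−1})/gcd(q₀,...,qₛ), 0, ..., 0). Then e₁,...,eₙ form a ℤ-basis of the lattice M. -/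
lemma pg_dvd_of_le {n : ℕ} (q : Fin (n+1) → ℕ) (t : ℕ) (j : Fin (n+1)) (hj : (j:ℕ) ≤ t) :
    partialGcd q t ∣ q j :=
  Finset.gcd_dvd (by simp [hj])

lemma pg_pos {n : ℕ} (q : Fin (n+1) → ℕ) (hq : 0 < q 0) (t : ℕ) : 0 < partialGcd q t := by
  rcases Nat.eq_zero_or_pos (partialGcd q t) with h | h
  · exfalso
    have h0 := pg_dvd_of_le q t 0 (Nat.zero_le t)
    rw [h] at h0
    have := Nat.eq_zero_of_zero_dvd h0
    omega
  · exact h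

lemma pg_succ_dvd {n : ℕ} (q : Fin (n+1) → ℕ) (s : ℕ) :
    partialGcd q (s+1) ∣ partialGcd q s :=
  Finset.dvd_gcd fun i hi => pg_dvd_of_le q (s+1) i (by simp at hi; omega)

lemma pg_succ {n : ℕ} (q : Fin (n+1) → ℕ) (s : Fin n) :
    partialGcd q ((s:ℕ)+1) = Nat.gcd (partialGcd q (s:ℕ)) (q s.succ) := by
  have hset : (Finset.univ.filter fun i : Fin (n+1) => (i:ℕ) ≤ (s:ℕ)+1)
      = insert s.succ (Finset.univ.filter fun i : Fin (n+1) => (i:ℕ) ≤ (s:ℕ)) := by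
    ext i
    simp [Fin.ext_iff]
    omega
  rw [partialGcd, hset, Finset.gcd_insert]
  exact Nat.gcd_comm _ _

/-- Proposition 2 (nbasis): the vectors `e₁,...,eₙ` constructed in the paper form a
`ℤ`-basis of the lattice `M = { m ∈ ℤ^{n+1} : Σ qᵢmᵢ = 0 }`: they are linearly
independent and every element of `M` is an integral combination of them. -/
theorem basis_of_lattice {n : ℕ} (q : Fin (n + 1) → ℕ) (hq : ∀ i, 0 < q i)
    (hgcd : Finset.univ.gcd q = 1)
    (e : Fin n → Fin (n + 1) → ℤ) (x : Fin n → Fin (n + 1) → ℤ)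
    (hsum : ∀ s : Fin n,
      (∑ j : Fin (n + 1), if (j : ℕ) ≤ (s : ℕ) then x s j * (q j : ℤ) else 0) +
        ((partialGcd q (s : ℕ) / partialGcd q ((s : ℕ) + 1) : ℕ) : ℤ) * (q s.succ : ℤ) =
        ((Finset.univ.lcm q : ℕ) : ℤ))
    (he : ∀ (s : Fin n) (j : Fin (n + 1)), e s j =
      if (j : ℕ) ≤ (s : ℕ) then
        x s j - (if (j : ℕ) = 0 then ((Finset.univ.lcm q / q 0 : ℕ) : ℤ) else 0)
      else if (j : ℕ) = (s : ℕ) + 1 then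
        ((partialGcd q (s : ℕ) / partialGcd q ((s : ℕ) + 1) : ℕ) : ℤ)
      else 0) :
    LinearIndependent ℤ e ∧
    ∀ m : Fin (n + 1) → ℤ,
      (∑ i, (q i : ℤ) * m i = 0) ↔ ∃ c : Fin n → ℤ, m = ∑ s, c s • e s := by
  have hδ : ((Finset.univ.lcm q / q 0 : ℕ) : ℤ) * (q 0 : ℤ) = ((Finset.univ.lcm q : ℕ) : ℤ) := by
    rw [← Nat.cast_mul, Nat.div_mul_cancel (Finset.dvd_lcm (Finset.mem_univ (0 : Fin (n+1))))]
  have hd : ∀ s : Fin n, 0 < partialGcd q (s:ℕ) / partialGcd q ((s:ℕ)+1) := fun s =>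
    Nat.div_pos (Nat.le_of_dvd (pg_pos q (hq 0) _) (pg_succ_dvd q _)) (pg_pos q (hq 0) _)
  -- each e s lies in the lattice
  have esum : ∀ s : Fin n, (∑ j, (q j : ℤ) * e s j) = 0 := by
    intro s
    have hdecomp : ∀ j : Fin (n+1), (q j : ℤ) * e s j =
        ((if (j:ℕ) ≤ (s:ℕ) then x s j * (q j : ℤ) else 0)
        + (if j = s.succ then
            ((partialGcd q (s:ℕ) / partialGcd q ((s:ℕ)+1) : ℕ):ℤ) * (q s.succ : ℤ) else 0))
        - (if j = (0 : Fin (n+1)) then ((Finset.univ.lcm q / q 0 : ℕ):ℤ) * (q 0 : ℤ) else 0) := by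
      intro j
      rcases eq_or_ne j (0 : Fin (n+1)) with rfl | h0
      · have h3 : (0 : Fin (n+1)) ≠ s.succ := (Fin.succ_ne_zero s).symm
        rw [he s 0,
          if_pos (show (((0 : Fin (n+1)) : ℕ)) ≤ (s:ℕ) from Nat.zero_le _),
          if_pos (show (((0 : Fin (n+1)) : ℕ)) = 0 from rfl),
          if_neg h3, if_pos rfl,
          if_pos (show (((0 : Fin (n+1)) : ℕ)) ≤ (s:ℕ) from Nat.zero_le _)]
        ring
      · have hv0 : (j:ℕ) ≠ 0 := fun hc => h0 (Fin.ext hc)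
        rcases le_or_gt (j:ℕ) (s:ℕ) with h | h
        · have hjs : j ≠ s.succ := by
            intro hc
            have : (j:ℕ) = (s:ℕ)+1 := by rw [hc]; rfl
            omega
          rw [he s j, if_pos h, if_neg hv0, if_neg hjs, if_neg h0, if_pos h]
          ring
        · rcases eq_or_ne (j:ℕ) ((s:ℕ)+1) with h1 | h1
          · have hj : j = s.succ := Fin.ext (by simpa using h1)
            subst hj
            rw [he s s.succ,
              if_neg (show ¬ (((s.succ : Fin (n+1)) : ℕ)) ≤ (s:ℕ) by simp),
              if_pos (show (((s.succ : Fin (n+1)) : ℕ)) = (s:ℕ)+1 by simp),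
              if_pos rfl, if_neg (Fin.succ_ne_zero s),
              if_neg (show ¬ (((s.succ : Fin (n+1)) : ℕ)) ≤ (s:ℕ) by simp)]
            ring
          · have hjs : j ≠ s.succ := fun hc => h1 (by rw [hc]; rfl)
            rw [he s j, if_neg (show ¬ (j:ℕ) ≤ (s:ℕ) by omega), if_neg h1, if_neg hjs,
              if_neg h0, if_neg (show ¬ (j:ℕ) ≤ (s:ℕ) by omega)]
            ring
    calc (∑ j, (q j : ℤ) * e s j)
        = (∑ j : Fin (n+1), if (j:ℕ) ≤ (s:ℕ) then x s j * (q j : ℤ) else 0)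
          + (∑ j : Fin (n+1), if j = s.succ then
              ((partialGcd q (s:ℕ) / partialGcd q ((s:ℕ)+1) : ℕ):ℤ) * (q s.succ : ℤ) else 0)
          - (∑ j : Fin (n+1), if j = (0 : Fin (n+1)) then
              ((Finset.univ.lcm q / q 0 : ℕ):ℤ) * (q 0 : ℤ) else 0) := by
          rw [← Finset.sum_add_distrib, ← Finset.sum_sub_distrib]
          exact Finset.sum_congr rfl fun j _ => hdecomp j
      _ = 0 := by
          rw [Finset.sum_ite_eq' Finset.univ s.succ, Finset.sum_ite_eq' Finset.univ (0 : Fin (n+1))]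
          simp only [Finset.mem_univ, if_true]
          rw [hsum s, hδ, sub_self]
  refine ⟨?_, ?_⟩
  · rw [Fintype.linearIndependent_iff]
    intro c hc
    have hcoord : ∀ j : Fin (n+1), (∑ s, c s * e s j) = 0 := by
      intro j
      have h := congrFun hc j
      simpa [Finset.sum_apply] using h
    have key : ∀ k : ℕ, ∀ s : Fin n, n - (s:ℕ) ≤ k → c s = 0 := by
      intro k
      induction k with
      | zero => intro s hs; exact absurd hs (by have := s.isLt; omega)
      | succ k ih =>
        intro s _
        have hzero : ∀ t : Fin n, (s:ℕ) < (t:ℕ) → c t = 0 := fun t ht => ih t (by omega)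
        have hco := hcoord s.succ
        rw [Finset.sum_eq_single s] at hco
        · have hes : e s s.succ = ((partialGcd q (s:ℕ) / partialGcd q ((s:ℕ)+1) : ℕ):ℤ) := by
            rw [he s s.succ,
              if_neg (show ¬ (((s.succ : Fin (n+1)) : ℕ)) ≤ (s:ℕ) by simp),
              if_pos (show (((s.succ : Fin (n+1)) : ℕ)) = (s:ℕ)+1 by simp)]
          rw [hes] at hco
          have hdne : ((partialGcd q (s:ℕ) / partialGcd q ((s:ℕ)+1) : ℕ):ℤ) ≠ 0 := by
            exact_mod_cast (hd s).ne'
          exact (mul_eq_zero.mp hco).resolve_right hdne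
        · intro t _ hts
          have htv : (t:ℕ) ≠ (s:ℕ) := fun h => hts (Fin.ext h)
          rcases lt_or_gt_of_ne htv with h | h
          · have hez : e t s.succ = 0 := by
              rw [he t s.succ,
                if_neg (show ¬ (((s.succ : Fin (n+1)) : ℕ)) ≤ (t:ℕ) by simp; omega),
                if_neg (show ¬ (((s.succ : Fin (n+1)) : ℕ)) = (t:ℕ)+1 by simp; omega)]
            rw [hez, mul_zero]
          · rw [hzero t h, zero_mul]
        · intro h; exact absurd (Finset.mem_univ s) h
    intro s
    exact key n s (by omega)
  · intro m
    constructor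
    · intro hm
      have main : ∀ s : ℕ, ∀ m : Fin (n+1) → ℤ, (∑ i, (q i:ℤ) * m i = 0) →
          (∀ j : Fin (n+1), s < (j:ℕ) → m j = 0) →
          ∃ c : Fin n → ℤ, m = ∑ t, c t • e t := by
        intro s
        induction s with
        | zero =>
          intro m hm hsupp
          have h0 : ∑ i, (q i:ℤ) * m i = (q 0:ℤ) * m 0 := by
            apply Finset.sum_eq_single
            · intro i _ hi
              have : (0:ℕ) < (i:ℕ) := by
                rcases Nat.eq_zero_or_pos (i:ℕ) with h | h
                · exact absurd (Fin.ext h) hi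
                · exact h
              rw [hsupp i this, mul_zero]
            · intro h; exact absurd (Finset.mem_univ _) h
          have hm0 : m 0 = 0 := by
            rw [h0] at hm
            have hq0 : (q 0:ℤ) ≠ 0 := by exact_mod_cast (hq 0).ne'
            exact (mul_eq_zero.mp hm).resolve_left hq0
          refine ⟨0, funext fun j => ?_⟩
          rcases Nat.eq_zero_or_pos (j:ℕ) with hj | hj
          · have : j = 0 := Fin.ext hj
            simp [this, hm0]
          · simp [hsupp j hj]
        | succ s ih =>
          intro m hm hsupp
          by_cases hsn : s < n
          · set s' : Fin n := ⟨s, hsn⟩ with hs'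
            have hs'v : ((s' : Fin n) : ℕ) = s := rfl
            set j₁ : Fin (n+1) := Fin.succ s' with hj₁def
            have hj₁ : (j₁:ℕ) = s+1 := rfl
            set g := partialGcd q s with hg
            set g' := partialGcd q (s+1) with hg'
            have hsplit : (∑ i, (q i:ℤ) * m i) =
                (∑ j : Fin (n+1), ((if (j:ℕ) ≤ s then (q j:ℤ) * m j else 0)
                  + (if j = j₁ then (q j₁:ℤ) * m j₁ else 0))) := by
              apply Finset.sum_congr rfl
              intro j _
              rcases le_or_gt (j:ℕ) s with h | h
              · rw [if_pos h, if_neg, add_zero]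
                intro hj; rw [hj, hj₁] at h; omega
              · rcases eq_or_ne (j:ℕ) (s+1) with h1 | h1
                · have hj : j = j₁ := Fin.ext (by rw [hj₁]; exact h1)
                  rw [if_neg (by omega), if_pos hj, hj, zero_add]
                · have hj : j ≠ j₁ := fun hc => h1 (by rw [hc, hj₁])
                  rw [hsupp j (by omega), if_neg (by omega), if_neg hj, mul_zero, zero_add]
            have hm2 := hm
            rw [hsplit, Finset.sum_add_distrib, Finset.sum_ite_eq' Finset.univ j₁] at hm2
            simp only [Finset.mem_univ, if_true] at hm2
            have hgdvd : (g:ℤ) ∣ (q j₁:ℤ) * m j₁ := by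
              have h1 : (g:ℤ) ∣ ∑ j : Fin (n+1), (if (j:ℕ) ≤ s then (q j:ℤ) * m j else 0) := by
                apply Finset.dvd_sum
                intro j _
                split_ifs with h
                · exact Dvd.dvd.mul_right (Int.natCast_dvd_natCast.mpr (pg_dvd_of_le q s j h)) _
                · exact dvd_zero _
              have h2 : (q j₁:ℤ) * m j₁ =
                  -(∑ j : Fin (n+1), (if (j:ℕ) ≤ s then (q j:ℤ) * m j else 0)) := by
                linarith [hm2]
              rw [h2]
              exact dvd_neg.mpr h1
            have hgg' : Nat.gcd g (q j₁) = g' := by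
              rw [hg', hg]
              exact (pg_succ q s').symm
            have hg'pos : 0 < g' := pg_pos q (hq 0) _
            have hdd : ((g/g' : ℕ):ℤ) ∣ m j₁ := by
              have hcop : Nat.Coprime (g / g') (q j₁ / g') := by
                rw [← hgg']
                exact Nat.coprime_div_gcd_div_gcd (by rw [hgg']; exact hg'pos)
              have hge : (g:ℤ) = ((g/g' : ℕ):ℤ) * (g':ℤ) := by
                rw [← Nat.cast_mul, Nat.div_mul_cancel (pg_succ_dvd q s)]
              have hqe : (q j₁:ℤ) = ((q j₁/g' : ℕ):ℤ) * (g':ℤ) := by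
                rw [← Nat.cast_mul, Nat.div_mul_cancel]
                rw [← hgg']; exact Nat.gcd_dvd_right _ _
              have h3 : ((g/g' : ℕ):ℤ) * (g':ℤ) ∣ (((q j₁/g' : ℕ):ℤ) * m j₁) * (g':ℤ) := by
                rw [← hge]
                calc (g:ℤ) ∣ (q j₁:ℤ) * m j₁ := hgdvd
                  _ = (((q j₁/g' : ℕ):ℤ) * m j₁) * (g':ℤ) := by rw [hqe]; ring
              have h4 : ((g/g' : ℕ):ℤ) ∣ ((q j₁/g' : ℕ):ℤ) * m j₁ := by
                have hg'ne : (g':ℤ) ≠ 0 := by exact_mod_cast hg'pos.ne'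
                exact (mul_dvd_mul_iff_right hg'ne).mp h3
              exact (Nat.isCoprime_iff_coprime.mpr hcop).dvd_of_dvd_mul_left h4
            set c₀ : ℤ := m j₁ / ((g/g' : ℕ):ℤ) with hc₀def
            have hc₀ : c₀ * ((g/g' : ℕ):ℤ) = m j₁ := Int.ediv_mul_cancel hdd
            set m' : Fin (n+1) → ℤ := m - c₀ • e s' with hm'def
            have hm'sum : ∑ i, (q i:ℤ) * m' i = 0 := by
              have heq : ∀ i, (q i:ℤ) * m' i = (q i:ℤ) * m i - c₀ * ((q i:ℤ) * e s' i) := by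
                intro i
                simp only [hm'def, Pi.sub_apply, Pi.smul_apply, smul_eq_mul]
                ring
              rw [Finset.sum_congr rfl fun i _ => heq i, Finset.sum_sub_distrib, hm,
                ← Finset.mul_sum, esum s', mul_zero, sub_zero]
            have hm'supp : ∀ j : Fin (n+1), s < (j:ℕ) → m' j = 0 := by
              intro j hj
              rcases eq_or_ne (j:ℕ) (s+1) with h1 | h1
              · have hje : j = j₁ := Fin.ext (by rw [hj₁]; exact h1)
                have hes : e s' j₁ = ((g/g' : ℕ):ℤ) := by
                  rw [he s' j₁,
                    if_neg (show ¬ ((j₁ : Fin (n+1)) : ℕ) ≤ ((s' : Fin n):ℕ) by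
                      rw [hj₁, hs'v]; omega),
                    if_pos (show ((j₁ : Fin (n+1)) : ℕ) = ((s' : Fin n):ℕ)+1 by
                      rw [hj₁, hs'v])]
                simp only [hm'def, Pi.sub_apply, Pi.smul_apply, smul_eq_mul, hje, hes]
                rw [hc₀, sub_self]
              · have hez : e s' j = 0 := by
                  rw [he s' j,
                    if_neg (show ¬ (j:ℕ) ≤ ((s' : Fin n):ℕ) by rw [hs'v]; omega),
                    if_neg (show ¬ (j:ℕ) = ((s' : Fin n):ℕ)+1 by rw [hs'v]; omega)]
                simp only [hm'def, Pi.sub_apply, Pi.smul_apply, smul_eq_mul, hez, mul_zero,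
                  sub_zero]
                exact hsupp j (by omega)
            obtain ⟨c, hc⟩ := ih m' hm'sum hm'supp
            refine ⟨fun t => c t + if t = s' then c₀ else 0, ?_⟩
            have hme : m = m' + c₀ • e s' := by simp [hm'def]
            rw [hme, hc]
            rw [show (∑ t, (c t + if t = s' then c₀ else 0) • e t)
                = (∑ t, (c t • e t + (if t = s' then c₀ else 0) • e t)) from
              Finset.sum_congr rfl fun t _ => add_smul _ _ _]
            rw [Finset.sum_add_distrib]
            congr 1
            rw [show (∑ t, (if t = s' then c₀ else 0) • e t)
                = (∑ t, (if t = s' then c₀ • e s' else 0)) from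
              Finset.sum_congr rfl fun t _ => by split_ifs with h <;> simp [h]]
            rw [Finset.sum_ite_eq' Finset.univ s']
            simp
          · exact ih m hm fun j hj => (by have := j.isLt; omega : False).elim
      exact main n m hm fun j hj => (by have := j.isLt; omega : False).elim
    · rintro ⟨c, rfl⟩
      simp only [Finset.sum_apply, Pi.smul_apply, smul_eq_mul, Finset.mul_sum]
      rw [Finset.sum_comm]
      refine Finset.sum_eq_zero fun s _ => ?_
      have heq : ∀ i : Fin (n+1), (q i:ℤ) * (c s * e s i) = c s * ((q i:ℤ) * e s i) :=
        fun i => by ring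
      rw [Finset.sum_congr rfl fun i _ => heq i, ← Finset.mul_sum, esum s, mul_zero]
end

section
/- Let q₀,...,qₙ be positive integers with gcd 1, δ = lcm(q₀,...,qₙ). The squared Euclidean norm of the cross product w₁ × ⋯ × wₙ of the vectors wᵢ = −(δ/q₀)ê₀ + (δ/qᵢ)êᵢ (i = 1,...,n) equals δ^{2n}(q₀² + q₁² + ⋯ + qₙ²)/(q₀²q₁²⋯qₙ²). -/
/-!
Each coordinate of a cross product is a determinant whose first row is `êₖ` (Laplace expansion).
For rows `-a ê₀ + bᵢ êᵢ₊₁` with all `bᵢ ≠ 0`, adding `a / bⱼ` times column `j + 1` to column `0`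
makes that matrix upper triangular, so `w₁ × ⋯ × wₙ = (∏ bᵢ) (1, a/b₁, …, a/bₙ)`. Here
`a = δ/q₀` and `bᵢ = δ/qᵢ`, so `a/bᵢ = qᵢ/q₀`, and the norm follows by summing squares.
-/

open Matrix

lemma det_cons_eq_sum_mul_crossProd {n : ℕ} (x : Fin (n + 1) → ℝ)
    (v : Fin n → Fin (n + 1) → ℝ) :
    (of (Fin.cons x v : Fin (n + 1) → Fin (n + 1) → ℝ)).det = ∑ k, x k * crossProd v k := by
  rw [det_succ_row_zero]
  refine Finset.sum_congr rfl fun k _ => ?_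
  simp only [crossProd, of_apply, Fin.cons_zero, submatrix, Fin.cons_succ]
  ring

/-- With any first row prepended, these rows form an arrowhead matrix. -/
def arrowheadRows {n : ℕ} (a : ℝ) (b : Fin n → ℝ) : Fin n → Fin (n + 1) → ℝ :=
  fun i => Fin.cons (-a) (Pi.single i (b i))

lemma det_cons_arrowheadRows {n : ℕ} (a : ℝ) {b : Fin n → ℝ} (hb : ∀ i, b i ≠ 0)
    (x : Fin (n + 1) → ℝ) :
    (of (Fin.cons x (arrowheadRows a b) : Fin (n + 1) → Fin (n + 1) → ℝ)).det =
      (∑ l, (Fin.cons 1 fun j => a / b j : Fin (n + 1) → ℝ) l * x l) * ∏ i, b i := by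
  set A := of (Fin.cons x (arrowheadRows a b) : Fin (n + 1) → Fin (n + 1) → ℝ)
  set c : Fin (n + 1) → ℝ := Fin.cons 1 fun j => a / b j
  set B := A.updateCol 0 fun k => ∑ l, c l • A k l
  have hcorner : B 0 0 = ∑ l, c l * x l := by simp [B, A]
  have hcol : ∀ i : Fin n, B i.succ 0 = 0 := fun i => by
    simp [B, A, Fin.sum_univ_succ, c, arrowheadRows, Pi.single_apply, hb i]
  have hminor : B.submatrix Fin.succ Fin.succ = diagonal b := by
    ext i j
    simp [B, A, arrowheadRows, diagonal, Pi.single_apply, eq_comm]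
  calc A.det = B.det := by rw [det_updateCol_sum, show c 0 = 1 from rfl, one_smul]
    _ = B 0 0 * (B.submatrix Fin.succ Fin.succ).det := by
      rw [det_succ_column_zero, Fin.sum_univ_succ]
      simp [hcol]
    _ = _ := by rw [hcorner, hminor, det_diagonal]

lemma crossProd_arrowheadRows {n : ℕ} (a : ℝ) {b : Fin n → ℝ} (hb : ∀ i, b i ≠ 0) :
    crossProd (arrowheadRows a b) =
      (∏ i, b i) • (Fin.cons 1 fun j => a / b j : Fin (n + 1) → ℝ) := by
  funext k
  have h := det_cons_eq_sum_mul_crossProd (Pi.single k 1) (arrowheadRows a b)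
  rw [det_cons_arrowheadRows a hb] at h
  simpa [Pi.single_apply, mul_comm] using h.symm

lemma sum_sq_crossProd_arrowheadRows {n : ℕ} (a : ℝ) {b : Fin n → ℝ} (hb : ∀ i, b i ≠ 0) :
    ∑ k, crossProd (arrowheadRows a b) k ^ 2 = (∏ i, b i) ^ 2 * (1 + ∑ j, (a / b j) ^ 2) := by
  simp [crossProd_arrowheadRows a hb, Fin.sum_univ_succ, mul_pow, mul_add, Finset.mul_sum]

lemma wvec_eq_arrowheadRows {n : ℕ} (q : Fin (n + 1) → ℕ) (δ : ℕ) :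
    wvec q δ = arrowheadRows (δ / q 0) fun i => δ / q i.succ := by
  ext i j
  cases j using Fin.cases with
  | zero => simp [wvec, arrowheadRows]
  | succ j =>
    by_cases h : i = j <;> simp [wvec, arrowheadRows, Fin.val_inj, eq_comm, h]

theorem crossProd_wvec_norm_sq_general {n : ℕ} (q : Fin (n + 1) → ℕ) (hq : ∀ i, 0 < q i) :
    ∑ k, (crossProd (wvec q (Finset.univ.lcm q)) k) ^ 2 =
      ((Finset.univ.lcm q : ℕ) : ℝ) ^ (2 * n) * (∑ i, (q i : ℝ) ^ 2) /
        ∏ i, (q i : ℝ) ^ 2 := by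
  set δ := Finset.univ.lcm q
  have hq' : ∀ i, (q i : ℝ) ≠ 0 := fun i => by exact_mod_cast (hq i).ne'
  have hδ : (δ : ℝ) ≠ 0 := by
    simpa [δ, Finset.lcm_eq_zero_iff] using fun i => (hq i).ne'
  have hratio : ∀ j : Fin n, (δ / q 0 : ℝ) / (δ / q j.succ) = q j.succ / q 0 := fun j =>
    div_div_div_cancel_left' _ _ hδ
  rw [wvec_eq_arrowheadRows, sum_sq_crossProd_arrowheadRows _ fun i => div_ne_zero hδ (hq' _)]
  simp only [hratio, div_pow, ← Finset.sum_div, Finset.prod_div_distrib, Finset.prod_const,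
    Finset.card_univ, Fintype.card_fin, Fin.sum_univ_succ (fun i => (q i : ℝ) ^ 2),
    Fin.prod_univ_succ (fun i => (q i : ℝ) ^ 2), Finset.prod_pow]
  field_simp [hq' 0]
  ring

/-- `|w₁ × ⋯ × wₙ|² = δ^{2n}(q₀²+⋯+qₙ²)/(q₀²⋯qₙ²)`. -/
theorem crossProd_wvec_norm_sq {n : ℕ} (q : Fin (n + 1) → ℕ) (hq : ∀ i, 0 < q i)
    (hgcd : Finset.univ.gcd q = 1) :
    ∑ k, (crossProd (wvec q (Finset.univ.lcm q)) k) ^ 2 =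
      ((Finset.univ.lcm q : ℕ) : ℝ) ^ (2 * n) * (∑ i, (q i : ℝ) ^ 2) /
        ∏ i, (q i : ℝ) ^ 2 :=
  crossProd_wvec_norm_sq_general q hq
end
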